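/- Let G be a group generated by a finite set S, equipped with the word metric d_S, let H ≤ G be a subgroup, and let n be a natural number. Then H coarsely n-separates G if and only if ẽ(G,H) ≥ n. -/

import Mathlib

open Metric Set
open scoped NNReal Pointwise

/-- The closed `r`-neighbourhood `N_r(A)` of a subset `A` of a metric space. -/
def nbhd {X : Type*} [PseudoMetricSpace X] (r : ℝ≥0) (A : Set X) : Set X :=
  {x : X | ∃ a ∈ A, nndist x a ≤ r}

/-- The word length of `g` with respect to a generating set `S`: the least `n` such
that `g` is a product of `n` elements of `S ∪ S⁻¹`. -/
noncomputable def wordLength {G : Type*} [Group G] (S : Set G) (g : G) : ℕ :=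
  sInf {n : ℕ | ∃ l : List G, (∀ x ∈ l, x ∈ S ∨ x⁻¹ ∈ S) ∧ l.prod = g ∧ l.length = n}

/-- The metric on `G` is the word metric with respect to `S`. -/
def IsWordMetric {G : Type*} [Group G] [MetricSpace G] (S : Set G) : Prop :=
  ∀ g h : G, dist g h = wordLength S (g⁻¹ * h)

/-- A subset `A ⊆ G` is `H`-finite if `A ⊆ H·R` for some finite `R ⊆ G`. -/
def HFinite {G : Type*} [Group G] (H : Subgroup G) (A : Set G) : Prop :=
  ∃ R : Set G, R.Finite ∧ A ⊆ (H : Set G) * R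

/-- The coarse `r`-boundary `∂_r C := {x ∈ X \ C : d(x,C) ≤ r}`. -/
def coarseBoundary {X : Type*} [PseudoMetricSpace X] (r : ℝ≥0) (C : Set X) : Set X :=
  {x : X | x ∉ C ∧ ∃ c ∈ C, nndist x c ≤ r}

/-- `C` is an `(r,A)`-coarse complementary component of `W`:
`∂_r (C \ N_A(W)) ⊆ N_A(W)`. -/
def IsCCC {X : Type*} [PseudoMetricSpace X] (r A : ℝ≥0) (W C : Set X) : Prop :=
  coarseBoundary r (C \ nbhd A W) ⊆ nbhd A W

/-- `C` is a coarse complementary component of `W`, i.e. an `(r,A)`-coarse complementary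
component for some `r ≥ 1`, `A ≥ 0`. -/
def IsCoarseCompComplement {X : Type*} [PseudoMetricSpace X] (W C : Set X) : Prop :=
  ∃ r A : ℝ≥0, 1 ≤ r ∧ IsCCC r A W C

/-- A coarse complementary component is shallow if contained in some neighbourhood of
`W`, and deep otherwise. -/
def IsShallow {X : Type*} [PseudoMetricSpace X] (W C : Set X) : Prop :=
  ∃ R : ℝ≥0, C ⊆ nbhd R W

/-- `W` coarsely `n`-separates `X`: there are `n` deep, pairwise coarse disjoint,
coarse complementary components of `W`. -/
def CoarselySeparates {X : Type*} [PseudoMetricSpace X] (n : ℕ) (W : Set X) : Prop :=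
  ∃ C : Fin n → Set X,
    (∀ i, IsCoarseCompComplement W (C i)) ∧
    (∀ i, ¬ IsShallow W (C i)) ∧
    ∀ i j : Fin n, i ≠ j → IsShallow W (C i ∩ C j)

/-- `F_H(G)`: the subspace of `P(G) = (G → ℤ/2)` consisting of (indicator functions of)
`H`-finite subsets of `G`. -/
def hFinSupport {G : Type*} [Group G] (H : Subgroup G) :
    Submodule (ZMod 2) (G → ZMod 2) where
  carrier := {f | HFinite H {g : G | f g ≠ 0}}
  add_mem' := by
    rintro f g ⟨R, hR, hfR⟩ ⟨T, hT, hgT⟩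
    refine ⟨R ∪ T, hR.union hT, ?_⟩
    intro x hx
    rw [Set.mul_union]
    by_cases hfx : f x = 0
    · have hgx : g x ≠ 0 := by
        intro h0
        exact hx (by simp [Set.mem_setOf_eq, Pi.add_apply, hfx, h0])
      exact Or.inr (hgT hgx)
    · exact Or.inl (hfR hfx)
  zero_mem' := ⟨∅, Set.finite_empty, by intro x hx; exact absurd rfl hx⟩
  smul_mem' := by
    rintro c f ⟨R, hR, hfR⟩
    refine ⟨R, hR, ?_⟩
    intro x hx
    refine hfR ?_
    intro h0
    exact hx (by simp [Set.mem_setOf_eq, Pi.smul_apply, h0])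

/-- The right-translation action `C ↦ Cg` of `g ∈ G` on `P(G)/F_H(G)`. -/
noncomputable def etildeMap {G : Type*} [Group G] (H : Subgroup G) (g : G) :
    ((G → ZMod 2) ⧸ hFinSupport H) →ₗ[ZMod 2] ((G → ZMod 2) ⧸ hFinSupport H) :=
  Submodule.mapQ _ _ (LinearMap.funLeft (ZMod 2) (ZMod 2) (fun x : G => x * g⁻¹))
    (by
      rintro f ⟨R, hR, hfR⟩
      refine ⟨R * {g}, hR.mul (Set.finite_singleton g), ?_⟩
      intro x hx
      have hx' : f (x * g⁻¹) ≠ 0 := hx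
      obtain ⟨h, hh, t, ht, hht⟩ := hfR hx'
      refine ⟨h, hh, t * g, ⟨t, ht, g, rfl, rfl⟩, ?_⟩
      show h * (t * g) = x
      rw [← mul_assoc, show h * t = x * g⁻¹ from hht]
      exact inv_mul_cancel_right x g)

/-- The subspace of `G`-fixed vectors of `P(G)/F_H(G)`; its `ℤ/2`-dimension is the
number of relative ends `ẽ(G,H)`. -/
noncomputable def etildeFixed {G : Type*} [Group G] (H : Subgroup G) :
    Submodule (ZMod 2) ((G → ZMod 2) ⧸ hFinSupport H) where
  carrier := {v | ∀ g : G, etildeMap H g v = v}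
  add_mem' := by
    intro u v hu hv g
    rw [map_add, hu g, hv g]
  zero_mem' := by
    intro g
    exact map_zero _
  smul_mem' := by
    intro c v hv g
    rw [map_smul, hv g]

/-!
Balls of the word metric are finite, so a subset of `G` is shallow (lies in a neighbourhood of
`H`) exactly when it is `H`-finite, and everything can be phrased in the Boolean ring
`G → ℤ/2` modulo the ideal `F_H(G)`. A vector of `P(G)/F_H(G)` is `G`-fixed exactly when it is
the class of an almost invariant set `C` (all `Cg ∆ C` are `H`-finite). If `C` is an
`(r, A)`-coarse complementary component of `H`, then `C \ N_A(H)` is almost invariant, because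
moving by a generator only crosses its boundary inside a neighbourhood of `H`; conversely an
almost invariant set is a `(1, ρ)`-coarse complementary component.

Deep, pairwise coarse disjoint components thus give idempotents outside `F_H(G)` whose pairwise
products lie in `F_H(G)`, and such idempotents are linearly independent modulo `F_H(G)`.
Conversely, lift `n` independent fixed vectors to almost invariant sets: they lie in the span of
the atoms of the Boolean algebra they generate, so at least `n` atoms are not `H`-finite, and
distinct atoms are disjoint.
-/

section OrthogonalIdempotents

variable {K A ι : Type*} [Field K] [Ring A] [Algebra K A]

theorem Submodule.linearIndependent_mkQ_of_orthogonal_idempotents {p : Submodule K A}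
    (hp : ∀ a, ∀ x ∈ p, a * x ∈ p) {e : ι → A} (he : ∀ i, IsIdempotentElem (e i))
    (horth : Pairwise fun i j => e i * e j ∈ p) (hne : ∀ i, e i ∉ p) :
    LinearIndependent K (p.mkQ ∘ e) := by
  classical
  rw [linearIndependent_iff']
  intro s c hc j hj
  have hsum : ∑ i ∈ s, c i • e i ∈ p := by
    rw [← Submodule.Quotient.mk_eq_zero, ← p.mkQ_apply, map_sum]
    simpa only [map_smul, Function.comp_apply] using hc
  have hmul : e j * ∑ i ∈ s, c i • e i = c j • e j + ∑ i ∈ s.erase j, c i • (e j * e i) := by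
    rw [Finset.mul_sum, ← Finset.add_sum_erase s _ hj, mul_smul_comm, (he j).eq]
    simp only [mul_smul_comm]
  have hj' : c j • e j ∈ p := by
    have := hp (e j) _ hsum
    rw [hmul] at this
    refine (p.add_mem_iff_left (p.sum_mem fun i hi => p.smul_mem _ ?_)).1 this
    exact horth (Finset.ne_of_mem_erase hi).symm
  by_contra hcj
  exact hne j ((p.smul_mem_iff hcj).1 hj')

end OrthogonalIdempotents

section BooleanAtoms

variable {K A ι : Type*} [Field K] [CommRing A] [Algebra K A] [Fintype ι]

def booleanAtom (u : ι → A) (v : ι → Bool) : A := ∏ i, if v i then u i else 1 - u i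

lemma booleanAtom_mem {B : Subalgebra K A} {u : ι → A} (hu : ∀ i, u i ∈ B) (v : ι → Bool) :
    booleanAtom u v ∈ B :=
  Subalgebra.prod_mem _ fun i _ => by
    split_ifs
    exacts [hu i, B.sub_mem B.one_mem (hu i)]

lemma booleanAtom_mul_booleanAtom_of_ne {u : ι → A} (hu : ∀ i, IsIdempotentElem (u i))
    {v w : ι → Bool} (hvw : v ≠ w) : booleanAtom u v * booleanAtom u w = 0 := by
  classical
  obtain ⟨i, hi⟩ := Function.ne_iff.1 hvw
  have hfactor : (if v i then u i else 1 - u i) * (if w i then u i else 1 - u i) = 0 := by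
    cases hv : v i <;> cases hw : w i <;>
      simp_all [(hu i).mul_one_sub_self, (hu i).one_sub_mul_self]
  rw [booleanAtom, booleanAtom, ← Finset.mul_prod_erase _ _ (Finset.mem_univ i),
    ← Finset.mul_prod_erase _ _ (Finset.mem_univ i), mul_mul_mul_comm, hfactor, zero_mul]

lemma mul_booleanAtom {u : ι → A} (hu : ∀ i, IsIdempotentElem (u i)) (i : ι) (v : ι → Bool) :
    u i * booleanAtom u v = if v i then booleanAtom u v else 0 := by
  classical
  rw [booleanAtom, ← Finset.mul_prod_erase _ _ (Finset.mem_univ i), ← mul_assoc]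
  cases v i <;> simp [(hu i).mul_one_sub_self, (hu i).eq]

lemma sum_booleanAtom [DecidableEq ι] (u : ι → A) : ∑ v, booleanAtom u v = 1 := by
  simp_rw [booleanAtom]
  rw [← Fintype.prod_sum (fun i (b : Bool) => if b then u i else 1 - u i)]
  simp

theorem Submodule.exists_orthogonal_idempotents_of_linearIndependent_mkQ {p : Submodule K A}
    {B : Subalgebra K A} {u : ι → A} (hu : ∀ i, IsIdempotentElem (u i)) (huB : ∀ i, u i ∈ B)
    (hind : LinearIndependent K (p.mkQ ∘ u)) :
    ∃ e : ι → A, (∀ i, e i ∈ B) ∧ (∀ i, e i ∉ p) ∧ Pairwise fun i j => e i * e j = 0 := by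
  classical
  set T := Finset.univ.filter fun v => booleanAtom u v ∉ p
  have hspan : ∀ i, p.mkQ (u i) ∈ span K (T.image (p.mkQ ∘ booleanAtom u) : Set (A ⧸ p)) := by
    intro i
    rw [← mul_one (u i), ← sum_booleanAtom u, Finset.mul_sum, map_sum]
    refine sum_mem fun v _ => ?_
    rw [mul_booleanAtom hu]
    split_ifs
    · by_cases hv : v ∈ T
      · exact subset_span (Finset.mem_image_of_mem _ hv)
      · rw [mkQ_apply, (Quotient.mk_eq_zero p).2 (by simpa [T] using hv)]
        exact zero_mem _
    · rw [map_zero]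
      exact zero_mem _
  have hcard : Fintype.card ι ≤ T.card := by
    have := linearIndependent_le_span' _ hind _ (Set.range_subset_iff.2 hspan)
    simp only [Cardinal.mk_fintype, Nat.cast_le, Finset.coe_sort_coe, Fintype.card_coe] at this
    exact this.trans Finset.card_image_le
  obtain ⟨φ⟩ := Function.Embedding.nonempty_of_card_le (α := ι) (β := T) (by simpa using hcard)
  exact ⟨fun i => booleanAtom u (φ i), fun i => booleanAtom_mem huB _,
    fun i => (Finset.mem_filter.1 (φ i).2).2,
    fun i j hij => booleanAtom_mul_booleanAtom_of_ne hu fun h => hij (φ.injective (Subtype.ext h))⟩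

end BooleanAtoms

section HFinite

variable {G : Type*} [Group G] {H : Subgroup G}

lemma HFinite.mono {A B : Set G} (hB : HFinite H B) (hAB : A ⊆ B) : HFinite H A :=
  let ⟨R, hR, hBR⟩ := hB
  ⟨R, hR, hAB.trans hBR⟩

lemma HFinite.union {A B : Set G} (hA : HFinite H A) (hB : HFinite H B) :
    HFinite H (A ∪ B) := by
  obtain ⟨R, hR, hAR⟩ := hA
  obtain ⟨T, hT, hBT⟩ := hB
  refine ⟨R ∪ T, hR.union hT, ?_⟩
  rw [Set.mul_union]
  exact Set.union_subset_union hAR hBT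

lemma HFinite.biUnion {ι : Type*} {t : Set ι} (ht : t.Finite) {A : ι → Set G}
    (hA : ∀ i ∈ t, HFinite H (A i)) : HFinite H (⋃ i ∈ t, A i) := by
  choose R hR hAR using hA
  refine ⟨⋃ i, ⋃ hi : i ∈ t, R i hi, ht.biUnion' hR, Set.iUnion₂_subset fun i hi => ?_⟩
  exact (hAR i hi).trans <| Set.mul_subset_mul_left <|
    Set.subset_iUnion₂ (κ := fun i => i ∈ t) (s := fun i hi => R i hi) i hi

lemma mem_hFinSupport_iff {f : G → ZMod 2} :
    f ∈ hFinSupport H ↔ HFinite H (Function.support f) := Iff.rfl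

lemma indicator_one_mem_hFinSupport_iff {D : Set G} :
    D.indicator 1 ∈ hFinSupport H ↔ HFinite H D := by
  rw [mem_hFinSupport_iff, Set.support_indicator, Function.support_one, Set.inter_univ]

lemma mul_mem_hFinSupport (g : G → ZMod 2) {f : G → ZMod 2} (hf : f ∈ hFinSupport H) :
    g * f ∈ hFinSupport H :=
  (mem_hFinSupport_iff.1 hf).mono (Function.support_mul_subset_right g f)

end HFinite

lemma isIdempotentElem_of_zmod_two {X : Type*} (f : X → ZMod 2) : IsIdempotentElem f :=
  funext fun x => by
    show f x * f x = f x
    generalize f x = a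
    revert a
    decide

section WordMetric

variable {G : Type*} [Group G] {S : Set G}

lemma exists_list_prod_eq_of_closure_eq_top (hSgen : Subgroup.closure S = ⊤) (g : G) :
    ∃ l : List G, (∀ x ∈ l, x ∈ S ∨ x⁻¹ ∈ S) ∧ l.prod = g := by
  have hg : g ∈ (Subgroup.closure S).toSubmonoid := hSgen ▸ Subgroup.mem_top g
  rw [Subgroup.closure_toSubmonoid] at hg
  obtain ⟨l, hl, rfl⟩ := Submonoid.exists_list_of_mem_closure hg
  exact ⟨l, fun x hx => (hl x hx).imp id Set.mem_inv.1, rfl⟩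

lemma exists_list_prod_eq_length_eq_wordLength (hSgen : Subgroup.closure S = ⊤) (g : G) :
    ∃ l : List G, (∀ x ∈ l, x ∈ S ∨ x⁻¹ ∈ S) ∧ l.prod = g ∧ l.length = wordLength S g := by
  obtain ⟨l, hl, hprod⟩ := exists_list_prod_eq_of_closure_eq_top hSgen g
  have hne : {n : ℕ | ∃ l : List G, (∀ x ∈ l, x ∈ S ∨ x⁻¹ ∈ S) ∧ l.prod = g ∧
      l.length = n}.Nonempty := ⟨_, l, hl, hprod, rfl⟩
  exact Nat.sInf_mem hne

lemma wordLength_le_one {s : G} (hs : s ∈ S ∨ s⁻¹ ∈ S) : wordLength S s ≤ 1 :=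
  Nat.sInf_le ⟨[s], by simpa using hs, List.prod_singleton, rfl⟩

lemma eq_one_or_of_wordLength_le_one (hSgen : Subgroup.closure S = ⊤) {g : G}
    (h : wordLength S g ≤ 1) : g = 1 ∨ g ∈ S ∨ g⁻¹ ∈ S := by
  obtain ⟨l, hl, rfl, hlen⟩ := exists_list_prod_eq_length_eq_wordLength hSgen g
  match l, hlen ▸ h with
  | [], _ => exact Or.inl List.prod_nil
  | [s], _ => exact Or.inr (by simpa using hl)

lemma finite_setOf_wordLength_le (hSfin : S.Finite) (hSgen : Subgroup.closure S = ⊤) (m : ℕ) :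
    {g : G | wordLength S g ≤ m}.Finite := by
  have : Finite ↥(S ∪ S⁻¹) := hSfin.union hSfin.inv
  refine ((List.finite_length_le ↥(S ∪ S⁻¹) m).image fun l => (l.map Subtype.val).prod).subset ?_
  intro g hg
  obtain ⟨l, hl, rfl, hlen⟩ := exists_list_prod_eq_length_eq_wordLength hSgen g
  replace hg : l.length ≤ m := hlen ▸ hg
  lift l to List ↥(S ∪ S⁻¹) using fun x hx => (hl x hx).imp id Set.mem_inv.2
  exact ⟨l, by simpa using hg, rfl⟩

variable [MetricSpace G]

lemma nndist_eq_wordLength (hword : IsWordMetric S) (x y : G) :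
    nndist x y = wordLength S (x⁻¹ * y) :=
  NNReal.eq <| by rw [coe_nndist, hword, NNReal.coe_natCast]

lemma nndist_mul_le_one (hword : IsWordMetric S) (x : G) {s : G} (hs : s ∈ S ∨ s⁻¹ ∈ S) :
    nndist x (x * s) ≤ 1 := by
  rw [nndist_eq_wordLength hword, inv_mul_cancel_left]
  exact_mod_cast wordLength_le_one hs

lemma mem_nbhd_of_nndist_le {X : Type*} [PseudoMetricSpace X] {W : Set X} {r d : ℝ≥0}
    {x y : X} (hy : y ∈ nbhd r W) (hxy : nndist x y ≤ d) : x ∈ nbhd (r + d) W := by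
  obtain ⟨a, ha, hya⟩ := hy
  exact ⟨a, ha, (nndist_triangle x y a).trans (add_comm r d ▸ add_le_add hxy hya)⟩

lemma nbhd_mono {X : Type*} [PseudoMetricSpace X] {W : Set X} {r r' : ℝ≥0} (h : r ≤ r') :
    nbhd r W ⊆ nbhd r' W :=
  fun _ ⟨a, ha, hxa⟩ => ⟨a, ha, hxa.trans h⟩

lemma hFinite_nbhd (hSfin : S.Finite) (hSgen : Subgroup.closure S = ⊤)
    (hword : IsWordMetric S) (H : Subgroup G) (r : ℝ≥0) : HFinite H (nbhd r (H : Set G)) := by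
  refine ⟨{g | wordLength S g ≤ ⌈r⌉₊}, finite_setOf_wordLength_le hSfin hSgen _, ?_⟩
  rintro x ⟨h, hh, hxh⟩
  refine ⟨h, hh, h⁻¹ * x, ?_, mul_inv_cancel_left h x⟩
  rw [nndist_comm, nndist_eq_wordLength hword] at hxh
  exact Nat.cast_le.1 (hxh.trans (Nat.le_ceil r))

lemma HFinite.exists_subset_nbhd (hword : IsWordMetric S) {H : Subgroup G} {A : Set G}
    (hA : HFinite H A) : ∃ ρ : ℝ≥0, A ⊆ nbhd ρ (H : Set G) := by
  obtain ⟨R, hR, hAR⟩ := hA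
  obtain ⟨M, hM⟩ := (hR.image fun t => wordLength S t⁻¹).bddAbove
  refine ⟨M, fun x hx => ?_⟩
  obtain ⟨h, hh, t, ht, rfl⟩ := hAR hx
  refine ⟨h, hh, ?_⟩
  rw [nndist_eq_wordLength hword, mul_inv_rev, inv_mul_cancel_right]
  exact_mod_cast hM ⟨t, ht, rfl⟩

lemma isShallow_iff_hFinite (hSfin : S.Finite) (hSgen : Subgroup.closure S = ⊤)
    (hword : IsWordMetric S) {H : Subgroup G} {C : Set G} :
    IsShallow (H : Set G) C ↔ HFinite H C :=
  ⟨fun ⟨R, hR⟩ => (hFinite_nbhd hSfin hSgen hword H R).mono hR,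
    fun hC => hC.exists_subset_nbhd hword⟩

end WordMetric

section AlmostInvariant

variable {G : Type*} [Group G] {H : Subgroup G}

def almostInvariant (H : Subgroup G) : Subalgebra (ZMod 2) (G → ZMod 2) where
  carrier := {f | ∀ g, (fun x => f (x * g)) - f ∈ hFinSupport H}
  mul_mem' {f f'} hf hf' g := by
    have : (fun x => (f * f') (x * g)) - f * f' =
        (fun x => f (x * g)) * ((fun x => f' (x * g)) - f') + f' * ((fun x => f (x * g)) - f) := by
      ext x
      simp only [Pi.mul_apply, Pi.sub_apply, Pi.add_apply]
      ring
    rw [this]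
    exact add_mem (mul_mem_hFinSupport _ (hf' g)) (mul_mem_hFinSupport _ (hf g))
  add_mem' {f f'} hf hf' g := by
    have : (fun x => (f + f') (x * g)) - (f + f') =
        ((fun x => f (x * g)) - f) + ((fun x => f' (x * g)) - f') := by
      ext x
      simp only [Pi.add_apply, Pi.sub_apply]
      ring
    rw [this]
    exact add_mem (hf g) (hf' g)
  algebraMap_mem' c g := by
    rw [show (fun x => algebraMap (ZMod 2) (G → ZMod 2) c (x * g)) = algebraMap _ _ c from rfl,
      sub_self]
    exact zero_mem _

lemma etildeMap_mk (g : G) (f : G → ZMod 2) :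
    etildeMap H g (Submodule.Quotient.mk f) = Submodule.Quotient.mk fun x => f (x * g⁻¹) :=
  rfl

lemma etildeMap_etildeMap (a b : G) (v : (G → ZMod 2) ⧸ hFinSupport H) :
    etildeMap H a (etildeMap H b v) = etildeMap H (b * a) v := by
  obtain ⟨f, rfl⟩ := Submodule.Quotient.mk_surjective _ v
  simp only [etildeMap_mk, mul_inv_rev, mul_assoc]

lemma etildeMap_one (v : (G → ZMod 2) ⧸ hFinSupport H) : etildeMap H 1 v = v := by
  obtain ⟨f, rfl⟩ := Submodule.Quotient.mk_surjective _ v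
  simp only [etildeMap_mk, inv_one, mul_one]

def etildeStabilizer (H : Subgroup G) (v : (G → ZMod 2) ⧸ hFinSupport H) : Subgroup G where
  carrier := {g | etildeMap H g v = v}
  one_mem' := etildeMap_one v
  mul_mem' {a b} (ha : etildeMap H a v = v) (hb : etildeMap H b v = v) :=
    show etildeMap H (a * b) v = v by rw [← etildeMap_etildeMap b a, ha, hb]
  inv_mem' {g} (hg : etildeMap H g v = v) :=
    show etildeMap H g⁻¹ v = v by
      conv_lhs => rw [← hg]
      rw [etildeMap_etildeMap, mul_inv_cancel, etildeMap_one]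

lemma mk_mem_etildeFixed_iff {f : G → ZMod 2} :
    (Submodule.Quotient.mk f : (G → ZMod 2) ⧸ hFinSupport H) ∈ etildeFixed H ↔
      f ∈ almostInvariant H := by
  refine ⟨fun hf g => ?_, fun hf g => ?_⟩
  · simpa [etildeMap_mk, Submodule.Quotient.eq] using hf g⁻¹
  · rw [etildeMap_mk, Submodule.Quotient.eq]
    exact hf g⁻¹

lemma mem_almostInvariant_of_closure_eq_top {S : Set G} (hSgen : Subgroup.closure S = ⊤)
    {f : G → ZMod 2} (hf : ∀ s ∈ S, (fun x => f (x * s)) - f ∈ hFinSupport H) :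
    f ∈ almostInvariant H := by
  rw [← mk_mem_etildeFixed_iff]
  have hS : S ≤ etildeStabilizer H (Submodule.Quotient.mk f) := fun s hs => by
    have : s⁻¹ ∈ etildeStabilizer H (Submodule.Quotient.mk f) := by
      show etildeMap H s⁻¹ _ = _
      rw [etildeMap_mk, inv_inv, Submodule.Quotient.eq]
      exact hf s hs
    simpa using inv_mem this
  intro g
  exact (Subgroup.closure_le _).2 hS (hSgen ▸ Subgroup.mem_top g)

end AlmostInvariant

section CoarseComponents

variable {G : Type*} [Group G] [MetricSpace G] {S : Set G} {H : Subgroup G}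

lemma IsCCC.indicator_mem_almostInvariant (hSfin : S.Finite) (hSgen : Subgroup.closure S = ⊤)
    (hword : IsWordMetric S) {r A : ℝ≥0} (hr : 1 ≤ r) {C : Set G} (hC : IsCCC r A (H : Set G) C) :
    (C \ nbhd A (H : Set G)).indicator 1 ∈ almostInvariant H := by
  refine mem_almostInvariant_of_closure_eq_top hSgen fun s hs => ?_
  set D := C \ nbhd A (H : Set G)
  refine (hFinite_nbhd hSfin hSgen hword H (A + r)).mono fun x hx => ?_
  have hxs : nndist x (x * s) ≤ r := (nndist_mul_le_one hword x (Or.inl hs)).trans hr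
  by_cases hxD : x ∈ D
  · have hxsD : x * s ∉ D := fun h => hx (by simp [hxD, h])
    exact mem_nbhd_of_nndist_le (hC ⟨hxsD, x, hxD, nndist_comm x (x * s) ▸ hxs⟩) hxs
  · have hxsD : x * s ∈ D := by_contra fun h => hx (by simp [hxD, h])
    exact nbhd_mono (le_add_of_nonneg_right r.2) (hC ⟨hxD, x * s, hxsD, hxs⟩)

lemma isCoarseCompComplement_support (hSfin : S.Finite) (hSgen : Subgroup.closure S = ⊤)
    (hword : IsWordMetric S) {f : G → ZMod 2} (hf : f ∈ almostInvariant H) :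
    IsCoarseCompComplement (H : Set G) (Function.support f) := by
  obtain ⟨ρ, hρ⟩ :=
    (HFinite.biUnion (hSfin.union hSfin.inv) fun s _ => hf s).exists_subset_nbhd hword
  refine ⟨1, ρ, le_rfl, ?_⟩
  rintro x ⟨hxD, c, ⟨hc, -⟩, hxc⟩
  by_contra hxN
  have hfx : f x = 0 := by_contra fun h => hxD ⟨h, hxN⟩
  rw [nndist_eq_wordLength hword, ← Nat.cast_one, Nat.cast_le] at hxc
  rcases eq_one_or_of_wordLength_le_one hSgen hxc with h | hs
  · exact hc (by rwa [← mul_inv_cancel_left x c, h, mul_one])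
  · refine hxN (hρ (Set.mem_biUnion (x := x⁻¹ * c) (hs.imp id Set.mem_inv.2) ?_))
    simpa [hfx] using hc

end CoarseComponents

section Main

variable {G : Type*} [Group G] [MetricSpace G] {S : Set G}

theorem CoarselySeparates.natCast_le_rank_etildeFixed (hSfin : S.Finite)
    (hSgen : Subgroup.closure S = ⊤) (hword : IsWordMetric S) {H : Subgroup G} {n : ℕ}
    (hsep : CoarselySeparates n (H : Set G)) :
    (n : Cardinal) ≤ Module.rank (ZMod 2) (etildeFixed H) := by
  obtain ⟨C, hcomp, hdeep, hdisj⟩ := hsep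
  choose r A hr hC using hcomp
  set D : Fin n → Set G := fun i => C i \ nbhd (A i) (H : Set G)
  have hfix (i : Fin n) : Submodule.Quotient.mk ((D i).indicator 1) ∈ etildeFixed H :=
    mk_mem_etildeFixed_iff.2 ((hC i).indicator_mem_almostInvariant hSfin hSgen hword (hr i))
  have hne (i : Fin n) : (D i).indicator 1 ∉ hFinSupport H := fun hD => by
    rw [indicator_one_mem_hFinSupport_iff] at hD
    refine hdeep i ((isShallow_iff_hFinite hSfin hSgen hword).2 ?_)
    refine (hD.union (hFinite_nbhd hSfin hSgen hword H (A i))).mono ?_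
    rw [Set.sdiff_union_self]
    exact Set.subset_union_left
  have horth (i j : Fin n) (hij : i ≠ j) :
      (D i).indicator 1 * (D j).indicator 1 ∈ hFinSupport H := by
    rw [← Set.inter_indicator_one, indicator_one_mem_hFinSupport_iff]
    exact ((isShallow_iff_hFinite hSfin hSgen hword).1 (hdisj i j hij)).mono
      (Set.inter_subset_inter Set.sdiff_subset Set.sdiff_subset)
  have hind := Submodule.linearIndependent_mkQ_of_orthogonal_idempotents
    (fun g _ hf => mul_mem_hFinSupport g hf) (fun i => isIdempotentElem_of_zmod_two _) horth hne
  exact natCast_le_rank_iff.2 ⟨fun i => ⟨_, hfix i⟩, .of_comp (etildeFixed H).subtype hind⟩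

theorem coarselySeparates_of_natCast_le_rank_etildeFixed (hSfin : S.Finite)
    (hSgen : Subgroup.closure S = ⊤) (hword : IsWordMetric S) {H : Subgroup G} {n : ℕ}
    (hrank : (n : Cardinal) ≤ Module.rank (ZMod 2) (etildeFixed H)) :
    CoarselySeparates n (H : Set G) := by
  obtain ⟨v, hv⟩ := natCast_le_rank_iff.1 hrank
  choose u hu using fun i => Submodule.Quotient.mk_surjective _ (v i : (G → ZMod 2) ⧸ hFinSupport H)
  have huB (i : Fin n) : u i ∈ almostInvariant H :=
    mk_mem_etildeFixed_iff.1 ((hu i).symm ▸ (v i).2)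
  have hind : LinearIndependent (ZMod 2) ((hFinSupport H).mkQ ∘ u) := by
    rw [show (hFinSupport H).mkQ ∘ u = (etildeFixed H).subtype ∘ v from funext hu]
    exact hv.map' _ (Submodule.ker_subtype _)
  obtain ⟨e, heB, hne, horth⟩ := Submodule.exists_orthogonal_idempotents_of_linearIndependent_mkQ
    (fun i => isIdempotentElem_of_zmod_two (u i)) huB hind
  refine ⟨fun i => Function.support (e i),
    fun i => isCoarseCompComplement_support hSfin hSgen hword (heB i),
    fun i hsh => hne i ((isShallow_iff_hFinite hSfin hSgen hword).1 hsh), fun i j hij => ?_⟩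
  rw [← Function.support_mul', horth hij, Function.support_zero]
  exact ⟨0, Set.empty_subset _⟩

end Main

/-- Let `G` be a group with the word metric with respect to a finite
generating set `S`, `H ≤ G` a subgroup, and `n : ℕ`. Then `H` coarsely `n`-separates
`G` iff the number of relative ends `ẽ(G,H)`, i.e. the `ℤ/2`-dimension of the space of
`G`-fixed vectors of `P(G)/F_H(G)`, is at least `n`. -/
theorem coarselySeparates_iff_relative_ends {G : Type*} [Group G] [MetricSpace G]
    (S : Set G) (hSfin : S.Finite) (hSgen : Subgroup.closure S = ⊤)
    (hword : IsWordMetric S) (H : Subgroup G) (n : ℕ) :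
    CoarselySeparates n (H : Set G) ↔
      (n : Cardinal) ≤ Module.rank (ZMod 2) ↥(etildeFixed H) :=
  ⟨CoarselySeparates.natCast_le_rank_etildeFixed hSfin hSgen hword,
    coarselySeparates_of_natCast_le_rank_etildeFixed hSfin hSgen hword⟩
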